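/- arXiv:1606.09418 — 2 statements merged into one kernel-verified Lean document; each statement's English description precedes it below -/
import Mathlib

section
/- Let α₁, α₂ be real numbers with |α₁| ≤ 1, |α₂| ≤ 1 and α₁ + α₂ ≥ 0. Then α₁^r + α₂^r ≥ 0 for every positive integer r. -/
theorem pow_add_pow_nonneg_of_add_nonneg {R : Type*} [Ring R] [LinearOrder R]
    [IsStrictOrderedRing R] {a b : R} (hab : 0 ≤ a + b) (n : ℕ) : 0 ≤ a ^ n + b ^ n := by
  rcases Nat.even_or_odd n with hn | hn
  · exact add_nonneg (hn.pow_nonneg a) (hn.pow_nonneg b)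
  · have hpow : (-a) ^ n ≤ b ^ n := hn.pow_le_pow.mpr (neg_le_iff_add_nonneg'.mpr hab)
    rw [hn.neg_pow] at hpow
    exact neg_le_iff_add_nonneg'.mp hpow

theorem stmt_7_general (α₁ α₂ : ℝ) (hsum : 0 ≤ α₁ + α₂) :
    ∀ r : ℕ, 0 < r → 0 ≤ α₁ ^ r + α₂ ^ r :=
  fun r _ ↦ pow_add_pow_nonneg_of_add_nonneg hsum r

theorem stmt_7 (α₁ α₂ : ℝ) (h₁ : |α₁| ≤ 1) (h₂ : |α₂| ≤ 1) (hsum : 0 ≤ α₁ + α₂) :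
    ∀ r : ℕ, 0 < r → 0 ≤ α₁ ^ r + α₂ ^ r :=
  stmt_7_general α₁ α₂ hsum
end

section
/- Let a : ℕ → ℂ satisfy |a(n)| = O(n^ε) for all ε > 0, with a(1) = 1 and a(m) ∈ ℂ ∖ ℝ_{≥0} for some m ≥ 2. Then for σ > 1 with ∑_n a(n) n^{-σ} ≠ 0, the function t ↦ (∑_n a(n) n^{-σ-it}) / (∑_n a(n) n^{-σ}) is not the characteristic function of any probability measure on ℝ. -/
/-!
Averaging in time recovers atoms: `T⁻¹ ∫₀ᵀ e^{itθ} dt → 𝟙[θ = 0]` boundedly, so by Fubini and dominated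
convergence the mean of `t ↦ φ(t) e^{-ity}` tends to `μ{y}` when `φ` is the characteristic function of `μ`,
and to `c_k` when `φ(t) = ∑ₙ cₙ e^{itxₙ}` is an absolutely convergent series with distinct frequencies and
`y = x_k`. If the normalised Dirichlet series were the characteristic function of `μ`, its coefficients
`a(n) n^{-σ} / D` would therefore be the masses `μ{-log n} ≥ 0`, and `a(m) = m^σ μ{-log m} / μ{0}` would be
a nonnegative real.
-/

open MeasureTheory Complex Filter Topology

lemma norm_exp_I_mul_ofReal_mul_ofReal (t θ : ℝ) : ‖cexp (I * t * θ)‖ = 1 := by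
  rw [mul_assoc, ← ofReal_mul, mul_comm, norm_exp_ofReal_mul_I]

lemma exp_I_mul_mul_exp_neg_I_mul (t x y : ℝ) :
    cexp (I * t * x) * cexp (-(I * t * y)) = cexp (I * t * (x - y : ℝ)) := by
  rw [← Complex.exp_add]
  push_cast
  ring_nf

noncomputable def timeAverage (f : ℝ → ℂ) (T : ℝ) : ℂ :=
  (T : ℂ)⁻¹ * ∫ t in (0 : ℝ)..T, f t

lemma norm_timeAverage_le {f : ℝ → ℂ} {M : ℝ} (hf : ∀ t, ‖f t‖ ≤ M) (T : ℝ) :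
    ‖timeAverage f T‖ ≤ M := by
  have hM : 0 ≤ M := (norm_nonneg _).trans (hf 0)
  rcases eq_or_ne T 0 with rfl | hT
  · simpa [timeAverage] using hM
  calc ‖timeAverage f T‖ ≤ |T|⁻¹ * (M * |T - 0|) := by
        rw [timeAverage, norm_mul, norm_inv, norm_real, Real.norm_eq_abs]
        gcongr
        exact intervalIntegral.norm_integral_le_of_norm_le_const fun t _ => hf t
    _ = M := by rw [sub_zero]; field_simp [abs_ne_zero.mpr hT]

lemma tendsto_timeAverage_exp (θ : ℝ) :
    Tendsto (timeAverage fun t => cexp (I * t * θ)) atTop (𝓝 (if θ = 0 then 1 else 0)) := by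
  split_ifs with hθ
  · refine tendsto_const_nhds.congr' ?_
    filter_upwards [eventually_ne_atTop 0] with T hT
    simp [timeAverage, hθ, hT]
  have hIθ : I * θ ≠ 0 := mul_ne_zero I_ne_zero (ofReal_ne_zero.mpr hθ)
  have hformula (T : ℝ) : timeAverage (fun t => cexp (I * t * θ)) T
      = (T : ℂ)⁻¹ * ((cexp (I * θ * T) - 1) / (I * θ)) := by
    simp_rw [timeAverage, mul_right_comm I, integral_exp_mul_complex hIθ]
    simp
  refine squeeze_zero_norm' (a := fun T => T⁻¹ * (2 / ‖I * θ‖)) ?_ ?_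
  · filter_upwards [eventually_gt_atTop 0] with T hT
    rw [hformula, norm_mul, norm_div, norm_inv, norm_real, Real.norm_of_nonneg hT.le]
    gcongr
    calc ‖cexp (I * θ * T) - 1‖ ≤ ‖cexp (I * θ * T)‖ + ‖(1 : ℂ)‖ := norm_sub_le _ _
      _ = 2 := by rw [mul_right_comm, norm_exp_I_mul_ofReal_mul_ofReal]; norm_num
  · simpa using tendsto_inv_atTop_zero.mul_const (2 / ‖I * θ‖)

section
variable {α : Type*} [MeasurableSpace α] {ρ : Measure α} {g : α → ℂ} {x : α → ℝ}

lemma timeAverage_integral_exp [SFinite ρ] (hg : Integrable g ρ) (hx : Measurable x) (T : ℝ) :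
    timeAverage (fun t => ∫ a, g a * cexp (I * t * x a) ∂ρ) T
      = ∫ a, g a * timeAverage (fun t => cexp (I * t * x a)) T ∂ρ := by
  have hint : Integrable (Function.uncurry fun (t : ℝ) a => g a * cexp (I * t * x a))
      ((volume.restrict (Set.uIoc 0 T)).prod ρ) := by
    have : IsFiniteMeasure (volume.restrict (Set.uIoc 0 T)) := isFiniteMeasure_restrict.mpr (by simp)
    refine Integrable.mono' ((integrable_const (1 : ℝ)).mul_prod hg.norm) ?_ (.of_forall fun p => ?_)
    · exact AEStronglyMeasurable.mul (f := fun p : ℝ × α => g p.2)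
        (g := fun p => cexp (I * p.1 * x p.2)) hg.aestronglyMeasurable.comp_snd
        (by fun_prop : Measurable _).aestronglyMeasurable
    · simp [Function.uncurry, norm_exp_I_mul_ofReal_mul_ofReal]
  simp_rw [timeAverage, intervalIntegral_integral_swap hint, intervalIntegral.integral_const_mul,
    ← integral_const_mul]
  congr with a
  ring

lemma tendsto_timeAverage_integral_exp [SFinite ρ] (hg : Integrable g ρ) (hx : Measurable x) :
    Tendsto (timeAverage fun t => ∫ a, g a * cexp (I * t * x a) ∂ρ) atTop
      (𝓝 (∫ a, {a | x a = 0}.indicator g a ∂ρ)) := by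
  simp_rw [funext (timeAverage_integral_exp hg hx)]
  have hcont (T : ℝ) : Continuous fun θ : ℝ => timeAverage (fun t => cexp (I * t * θ)) T :=
    continuous_const.mul (intervalIntegral.continuous_parametric_intervalIntegral_of_continuous'
      (by fun_prop) _ _)
  refine tendsto_integral_filter_of_dominated_convergence (fun a => ‖g a‖)
    (.of_forall fun T => hg.aestronglyMeasurable.mul
      ((hcont T).measurable.comp hx).aestronglyMeasurable)
    (.of_forall fun T => .of_forall fun a => ?_) hg.norm (.of_forall fun a => ?_)
  · rw [norm_mul]
    exact mul_le_of_le_one_right (norm_nonneg _)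
      (norm_timeAverage_le (fun t => (norm_exp_I_mul_ofReal_mul_ofReal t _).le) T)
  · convert (tendsto_timeAverage_exp (x a)).const_mul (g a) using 2
    simp [Set.indicator_apply]
end

lemma tendsto_timeAverage_integral_exp_mul_exp_neg (μ : Measure ℝ) [IsFiniteMeasure μ] (y : ℝ) :
    Tendsto (timeAverage fun t => (∫ x, cexp (I * t * x) ∂μ) * cexp (-(I * t * y))) atTop
      (𝓝 (μ.real {y})) := by
  have hshift (t : ℝ) : (∫ x, cexp (I * t * x) ∂μ) * cexp (-(I * t * y))
      = ∫ x, 1 * cexp (I * t * (x - y : ℝ)) ∂μ := by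
    simp_rw [← integral_mul_const, exp_I_mul_mul_exp_neg_I_mul, one_mul]
  have hatom : {x : ℝ | x - y = 0} = {y} := by ext; simp [sub_eq_zero]
  have h := tendsto_timeAverage_integral_exp (integrable_const (μ := μ) (1 : ℂ))
    (by fun_prop : Measurable fun x : ℝ => x - y)
  rw [hatom, integral_indicator_const _ (measurableSet_singleton y), real_smul, mul_one] at h
  simpa only [hshift] using h

lemma tendsto_timeAverage_tsum_exp_mul_exp_neg {ι : Type*} [Countable ι] {c : ι → ℂ}
    (hc : Summable c) {x : ι → ℝ} (hx : Function.Injective x) (k : ι) :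
    Tendsto (timeAverage fun t => (∑' n, c n * cexp (I * t * x n)) * cexp (-(I * t * x k)))
      atTop (𝓝 (c k)) := by
  let _ : MeasurableSpace ι := ⊤
  have hint : Integrable c Measure.count := integrable_count_iff.mpr (summable_norm_iff.mpr hc)
  have hshift (t : ℝ) : (∑' n, c n * cexp (I * t * x n)) * cexp (-(I * t * x k))
      = ∫ n, c n * cexp (I * t * (x n - x k : ℝ)) ∂Measure.count := by
    rw [integral_countable, ← tsum_mul_right]
    · refine tsum_congr fun n => ?_
      rw [count_real_singleton, one_smul, mul_assoc, exp_I_mul_mul_exp_neg_I_mul]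
    · exact hint.mul_bdd (measurable_of_countable _).aestronglyMeasurable
        (.of_forall fun n => (norm_exp_I_mul_ofReal_mul_ofReal t _).le)
  have hatom : {n | x n - x k = 0} = {k} := by ext; simp [sub_eq_zero, hx.eq_iff]
  simpa [funext hshift, hatom, integral_indicator (measurableSet_singleton k)] using
    tendsto_timeAverage_integral_exp hint (measurable_of_countable fun n => x n - x k)

lemma summable_mul_cpow_neg_of_norm_le_rpow {a : ℕ → ℂ} {s : ℂ} {ε C : ℝ} (hs : 1 + ε < s.re)
    (ha : ∀ n : ℕ, 1 ≤ n → ‖a n‖ ≤ C * (n : ℝ) ^ ε) :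
    Summable fun n : ℕ => a (n + 1) * ((n + 1 : ℕ) : ℂ) ^ (-s) := by
  have hL : LSeriesSummable a s := LSeriesSummable_of_le_const_mul_rpow hs
    ⟨C, fun n hn => by simpa using ha n (Nat.one_le_iff_ne_zero.mpr hn)⟩
  refine ((summable_nat_add_iff 1).mpr hL).congr fun n => ?_
  rw [LSeries.term_of_ne_zero n.succ_ne_zero, cpow_neg, div_eq_mul_inv]

lemma natCast_cpow_neg_ofReal_add_mul_I {n : ℕ} (hn : n ≠ 0) (σ t : ℝ) :
    (n : ℂ) ^ (-((σ : ℂ) + t * I)) = (n : ℂ) ^ (-(σ : ℂ)) * cexp (I * t * (-Real.log n : ℝ)) := by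
  have hn' : (n : ℂ) ≠ 0 := Nat.cast_ne_zero.mpr hn
  rw [neg_add, cpow_add _ _ hn', cpow_def_of_ne_zero hn' (-(t * I)), ← natCast_log]
  push_cast
  ring_nf

theorem stmt_15 (a : ℕ → ℂ)
    (ha_growth : ∀ ε : ℝ, 0 < ε → ∃ C : ℝ, 0 < C ∧
      ∀ n : ℕ, 1 ≤ n → ‖a n‖ ≤ C * (n : ℝ) ^ ε)
    (ha1 : a 1 = 1)
    (hm : ∃ m : ℕ, 2 ≤ m ∧ ¬ ∃ x : ℝ, 0 ≤ x ∧ a m = (x : ℂ))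
    (σ : ℝ) (hσ : 1 < σ)
    (hD : (∑' n : ℕ, a (n + 1) * ((n + 1 : ℕ) : ℂ) ^ (-(σ : ℂ))) ≠ 0) :
    ¬ ∃ μ : Measure ℝ, IsProbabilityMeasure μ ∧
      ∀ t : ℝ, (∫ x, Complex.exp (I * t * x) ∂μ)
        = (∑' n : ℕ, a (n + 1) * ((n + 1 : ℕ) : ℂ) ^ (-((σ : ℂ) + t * I)))
          / (∑' n : ℕ, a (n + 1) * ((n + 1 : ℕ) : ℂ) ^ (-(σ : ℂ))) := by
  rintro ⟨μ, hμ, hφ⟩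
  obtain ⟨m, hm2, hm⟩ := hm
  set D := ∑' n : ℕ, a (n + 1) * ((n + 1 : ℕ) : ℂ) ^ (-(σ : ℂ))
  set c : ℕ → ℂ := fun n => a (n + 1) * ((n + 1 : ℕ) : ℂ) ^ (-(σ : ℂ)) / D with hc_def
  set x : ℕ → ℝ := fun n => -Real.log (n + 1 : ℕ)
  obtain ⟨C, -, hC⟩ := ha_growth ((σ - 1) / 2) (by linarith)
  have hc : Summable c :=
    (summable_mul_cpow_neg_of_norm_le_rpow (by simp; linarith) hC).div_const D
  have hx : Function.Injective x := fun i j hij => by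
    simpa using Real.log_injOn_pos (by simp; positivity) (by simp; positivity) (neg_inj.mp hij)
  have hφc (t : ℝ) : ∫ y, cexp (I * t * y) ∂μ = ∑' n, c n * cexp (I * t * x n) := by
    rw [hφ t, ← tsum_div_const]
    refine tsum_congr fun n => ?_
    rw [natCast_cpow_neg_ofReal_add_mul_I n.succ_ne_zero]
    ring
  have hatom (k : ℕ) : c k = μ.real {x k} := by
    refine tendsto_nhds_unique (tendsto_timeAverage_tsum_exp_mul_exp_neg hc hx k) ?_
    simpa only [hφc] using tendsto_timeAverage_integral_exp_mul_exp_neg μ (x k)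
  have hratio : a m = (m : ℂ) ^ (σ : ℂ) * (c (m - 1) / c 0) := by
    have hmσ : (m : ℂ) ^ (σ : ℂ) ≠ 0 := cpow_ne_zero_iff.mpr (.inl (by norm_cast; omega))
    simp only [hc_def, Nat.sub_add_cancel (by omega : 1 ≤ m), zero_add, ha1, Nat.cast_one, one_cpow]
    rw [cpow_neg]
    field_simp
  refine hm ⟨(m : ℝ) ^ σ * (μ.real {x (m - 1)} / μ.real {x 0}), by positivity, ?_⟩
  rw [hratio, hatom, hatom, ofReal_mul, ofReal_cpow (Nat.cast_nonneg m)]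
  push_cast
  rfl
end
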